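/- arXiv:2003.06886 — 4 statements merged into one kernel-verified Lean document; each statement's English description precedes it below -/
import Mathlib

section
/- Let h₁, h₂ be Hermitian operators that anticommute and square to the identity, and set H = (1/(2i))[h₁,h₂]. For every t with 0 ≤ t ≤ π/2 there exist real pulse times t₁, t₂ such that exp(itH) = exp(it₁h₁)·exp(it₂h₂)·exp(it₂h₁)·exp(it₁h₂). Explicitly one may take t₁ = (1/2)·atan2( √(sin 2t)/(sin t + cos t), 1/(sin t + cos t) ) and t₂ = (1/2)·atan2( -√(sin 2t), cos t - sin t ). -/
/-!
Anticommuting involutions `h₁`, `h₂` make `I • h₁`, `I • h₂` a quaternion basis over `ℂ`, so each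
pulse `exp (iθ hⱼ)`, and also `exp (itH) = exp (-t k)`, is the image of a unit quaternion under the
lift `ℍ[ℂ] → A`. The identity thus reduces to a Hamilton product: with pulse angles `a / 2` and
`b / 2` the four pulses multiply to
`((cos a + cos b - sin a sin b) / 2, (sin a + cos a sin b) / 2, (sin a + cos a sin b) / 2,
(cos b - cos a + sin a sin b) / 2)`,
and the `atan2` choices of `a` and `b` are exactly those making this `(cos t, 0, 0, -sin t)`.
-/

open NormedSpace

/-- Two-argument arctangent: `atan2 y x = arg (x + y i)`. -/
noncomputable def atan2 (y x : ℝ) : ℝ := Complex.arg (x + y * Complex.I)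

section Atan2

open Real

variable {x y : ℝ}

theorem cos_atan2_of_sq_add_sq_eq_one (h : x ^ 2 + y ^ 2 = 1) : cos (atan2 y x) = x := by
  have hnorm : ‖(x + y * Complex.I : ℂ)‖ = 1 := by rw [Complex.norm_add_mul_I, h, sqrt_one]
  have hne : (x + y * Complex.I : ℂ) ≠ 0 := by
    intro h0
    simp [h0] at hnorm
  simp [atan2, Complex.cos_arg hne, hnorm]

theorem sin_atan2_of_sq_add_sq_eq_one (h : x ^ 2 + y ^ 2 = 1) : sin (atan2 y x) = y := by
  have hnorm : ‖(x + y * Complex.I : ℂ)‖ = 1 := by rw [Complex.norm_add_mul_I, h, sqrt_one]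
  simp [atan2, Complex.sin_arg, hnorm]

theorem depth4_angles {t : ℝ} (ht0 : 0 ≤ t) (ht1 : t ≤ π / 2) :
    ∃ a b : ℝ, a = atan2 (√(sin (2 * t)) / (sin t + cos t)) (1 / (sin t + cos t)) ∧
      b = atan2 (-√(sin (2 * t))) (cos t - sin t) ∧
      (cos a + cos b - sin a * sin b) / 2 = cos t ∧ (sin a + cos a * sin b) / 2 = 0 ∧
      (cos b - cos a + sin a * sin b) / 2 = -sin t := by
  have hs : 0 ≤ sin t := sin_nonneg_of_nonneg_of_le_pi ht0 (by linarith [pi_pos])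
  have hc : 0 ≤ cos t := cos_nonneg_of_mem_Icc ⟨by linarith [pi_pos], ht1⟩
  have hpyth := sin_sq_add_cos_sq t
  have hr : √(sin (2 * t)) ^ 2 = 2 * sin t * cos t := by
    rw [sin_two_mul, sq_sqrt (by positivity)]
  have hsum : sin t + cos t ≠ 0 := by nlinarith
  have ha : (1 / (sin t + cos t)) ^ 2 + (√(sin (2 * t)) / (sin t + cos t)) ^ 2 = 1 := by
    field_simp
    linear_combination hr - hpyth
  have hb : (cos t - sin t) ^ 2 + (-√(sin (2 * t))) ^ 2 = 1 := by
    linear_combination hr + hpyth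
  refine ⟨_, _, rfl, rfl, ?_⟩
  rw [cos_atan2_of_sq_add_sq_eq_one ha, sin_atan2_of_sq_add_sq_eq_one ha,
    cos_atan2_of_sq_add_sq_eq_one hb, sin_atan2_of_sq_add_sq_eq_one hb]
  refine ⟨?_, ?_, ?_⟩ <;> field_simp
  · linear_combination hr - hpyth
  · ring
  · linear_combination hpyth - hr

end Atan2

open Complex Quaternion

theorem exp_smul_of_sq_eq_neg_one {A : Type*} [NormedRing A] [NormedAlgebra ℂ A]
    [CompleteSpace A] {u : A} (hu : u ^ 2 = -1) (θ : ℂ) :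
    exp (θ • u) = cos θ • (1 : A) + sin θ • u := by
  have hpow (k : ℕ) : u ^ (2 * k) = ((-1 : ℂ) ^ k) • (1 : A) := by
    simp [pow_mul, hu, Algebra.smul_def]
  rw [exp_eq_tsum ℂ]
  refine (HasSum.even_add_odd ?_ ?_).tsum_eq
  · convert (hasSum_cos θ).smul_const (1 : A) using 2 with k
    rw [smul_pow, hpow, smul_smul, smul_smul]
    congr 1
    ring
  · convert (hasSum_sin θ).smul_const u using 2 with k
    rw [smul_pow, pow_succ u, hpow, smul_mul_assoc, one_mul, smul_smul, smul_smul]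
    congr 1
    ring

namespace QuaternionAlgebra.Basis

variable {A : Type*}

@[simps i j k]
def ofAnticommInvolutions [Ring A] [Algebra ℂ A] {h₁ h₂ : A}
    (anti : h₁ * h₂ = -(h₂ * h₁)) (sq₁ : h₁ ^ 2 = 1) (sq₂ : h₂ ^ 2 = 1) :
    Basis A (-1 : ℂ) 0 (-1) where
  i := I • h₁
  j := I • h₂
  k := -(h₁ * h₂)
  i_mul_i := by rw [smul_mul_smul_comm, ← sq h₁, sq₁]; simp
  j_mul_j := by rw [smul_mul_smul_comm, ← sq h₂, sq₂]; simp
  i_mul_j := by simp [smul_smul]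
  j_mul_i := by simp [smul_smul, anti]

variable [NormedRing A] [NormedAlgebra ℂ A] [CompleteSpace A] (q : Basis A (-1 : ℂ) 0 (-1))

theorem exp_smul_i (θ : ℂ) : exp (θ • q.i) = q.liftHom ⟨cos θ, sin θ, 0, 0⟩ := by
  rw [exp_smul_of_sq_eq_neg_one (by rw [sq, q.i_mul_i]; simp) θ]
  simp [lift, Algebra.algebraMap_eq_smul_one]

theorem exp_smul_j (θ : ℂ) : exp (θ • q.j) = q.liftHom ⟨cos θ, 0, sin θ, 0⟩ := by
  rw [exp_smul_of_sq_eq_neg_one (by rw [sq, q.j_mul_j]; simp) θ]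
  simp [lift, Algebra.algebraMap_eq_smul_one]

theorem exp_smul_k (θ : ℂ) : exp (θ • q.k) = q.liftHom ⟨cos θ, 0, 0, sin θ⟩ := by
  rw [exp_smul_of_sq_eq_neg_one (by rw [sq, q.k_mul_k]; simp) θ]
  simp [lift, Algebra.algebraMap_eq_smul_one]

end QuaternionAlgebra.Basis

theorem four_pulse_product (a b : ℂ) :
    (⟨cos (a / 2), sin (a / 2), 0, 0⟩ : ℍ[ℂ,-1,0,-1]) * ⟨cos (b / 2), 0, sin (b / 2), 0⟩ *
        ⟨cos (b / 2), sin (b / 2), 0, 0⟩ * ⟨cos (a / 2), 0, sin (a / 2), 0⟩ =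
      ⟨(cos a + cos b - sin a * sin b) / 2, (sin a + cos a * sin b) / 2,
        (sin a + cos a * sin b) / 2, (cos b - cos a + sin a * sin b) / 2⟩ := by
  obtain ⟨α, rfl⟩ : ∃ α, a = 2 * α := ⟨a / 2, by ring⟩
  obtain ⟨β, rfl⟩ : ∃ β, b = 2 * β := ⟨b / 2, by ring⟩
  have hα := sin_sq_add_cos_sq α
  have hβ := sin_sq_add_cos_sq β
  simp only [mul_div_cancel_left₀ _ (two_ne_zero' ℂ), cos_two_mul, sin_two_mul,
    QuaternionAlgebra.mk_mul_mk, QuaternionAlgebra.mk.injEq]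
  refine ⟨?_, ?_, ?_, ?_⟩
  · linear_combination (-(sin β) ^ 2) * hα - (1 - cos α ^ 2) * hβ
  · linear_combination cos α * sin α * hβ - cos β * sin β * hα
  · linear_combination cos α * sin α * hβ - cos β * sin β * hα
  · linear_combination cos β ^ 2 * hα - cos α ^ 2 * hβ

theorem depth4_decomposition_general
    {A : Type*} [NormedRing A] [NormedAlgebra ℂ A] [CompleteSpace A]
    (h₁ h₂ H : A)
    (anti : h₁ * h₂ = -(h₂ * h₁))
    (sq1 : h₁ ^ 2 = 1) (sq2 : h₂ ^ 2 = 1)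
    (hH : H = (2 * Complex.I)⁻¹ • (h₁ * h₂ - h₂ * h₁))
    (t : ℝ) (ht0 : 0 ≤ t) (ht1 : t ≤ Real.pi / 2) :
    ∃ t₁ t₂ : ℝ,
      t₁ = (1 / 2) * atan2 (Real.sqrt (Real.sin (2 * t)) / (Real.sin t + Real.cos t))
              (1 / (Real.sin t + Real.cos t)) ∧
      t₂ = (1 / 2) * atan2 (-Real.sqrt (Real.sin (2 * t))) (Real.cos t - Real.sin t) ∧
      exp ((Complex.I * t) • H) =
        exp ((Complex.I * t₁) • h₁) * exp ((Complex.I * t₂) • h₂) *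
        exp ((Complex.I * t₂) • h₁) * exp ((Complex.I * t₁) • h₂) := by
  obtain ⟨a, b, ha, hb, hre, him, hk⟩ := depth4_angles ht0 ht1
  refine ⟨a / 2, b / 2, by rw [ha]; ring, by rw [hb]; ring, ?_⟩
  set q := QuaternionAlgebra.Basis.ofAnticommInvolutions anti sq1 sq2
  have pulse₁ (θ : ℝ) : (I * θ) • h₁ = (θ : ℂ) • q.i := by
    simp [q, smul_smul, mul_comm]
  have pulse₂ (θ : ℝ) : (I * θ) • h₂ = (θ : ℂ) • q.j := by
    simp [q, smul_smul, mul_comm]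
  have generator : (I * t) • H = (-t : ℂ) • q.k := by
    rw [hH, show h₂ * h₁ = -(h₁ * h₂) by rw [anti, neg_neg], sub_neg_eq_add, ← two_smul ℂ,
      smul_smul, smul_smul]
    simp only [q, QuaternionAlgebra.Basis.k_ofAnticommInvolutions, smul_neg, neg_smul, neg_neg]
    congr 1
    field_simp
  rw [generator, pulse₁, pulse₂, pulse₁, pulse₂, q.exp_smul_k, q.exp_smul_i, q.exp_smul_j,
    q.exp_smul_i, q.exp_smul_j, ← map_mul, ← map_mul, ← map_mul]
  push_cast
  rw [four_pulse_product, cos_neg, sin_neg]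
  norm_cast
  rw [hre, him, hk, ofReal_zero]

/-- Depth-4 decomposition: for `0 ≤ t ≤ π/2`, `exp(itH)` with
`H = (1/(2i))[h₁,h₂]` decomposes as a product of four two-pulse exponentials,
with explicit pulse times given by two-argument arctangents. -/
theorem depth4_decomposition
    {A : Type*} [NormedRing A] [StarRing A] [NormedAlgebra ℂ A]
    [CompleteSpace A] [StarModule ℂ A]
    (h₁ h₂ H : A)
    (sa1 : IsSelfAdjoint h₁) (sa2 : IsSelfAdjoint h₂)
    (anti : h₁ * h₂ = -(h₂ * h₁))
    (sq1 : h₁ ^ 2 = 1) (sq2 : h₂ ^ 2 = 1)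
    (hH : H = (2 * Complex.I)⁻¹ • (h₁ * h₂ - h₂ * h₁))
    (t : ℝ) (ht0 : 0 ≤ t) (ht1 : t ≤ Real.pi / 2) :
    ∃ t₁ t₂ : ℝ,
      t₁ = (1 / 2) * atan2 (Real.sqrt (Real.sin (2 * t)) / (Real.sin t + Real.cos t))
              (1 / (Real.sin t + Real.cos t)) ∧
      t₂ = (1 / 2) * atan2 (-Real.sqrt (Real.sin (2 * t))) (Real.cos t - Real.sin t) ∧
      exp ((Complex.I * t) • H) =
        exp ((Complex.I * t₁) • h₁) * exp ((Complex.I * t₂) • h₂) *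
        exp ((Complex.I * t₂) • h₁) * exp ((Complex.I * t₁) • h₂) :=
  depth4_decomposition_general h₁ h₂ H anti sq1 sq2 hH t ht0 ht1
end

section
/- With the setup of the depth-3 decomposition: for 0 ≤ t ≤ π/2 and 0 < θ < π/2, the pulse times t₁ = (1/2)·arctan( cos(θ)sin(t)/cos(t) ) (principal branch, with the positive-cosine solution) and t₂ = arcsin( sin(θ)sin(t) ) satisfy |t₁| ≤ t/2 and |t₂| ≤ t·θ. -/
/-!
For `t₁`: `0 ≤ cos θ · tan t ≤ tan t`, and `arctan` is monotone with `arctan (tan t) = t`.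
For `t₂`: concavity of `sin` on `[0, π]` gives `s · sin θ ≤ sin (s θ)` for `s ∈ [0, 1]`; taking
`s = t` when `t ≤ 1` yields `sin θ sin t ≤ t sin θ ≤ sin (t θ)`, while for `t ≥ 1` simply
`sin θ sin t ≤ sin θ`. In both cases monotonicity of `arcsin` finishes.
-/

open Real

namespace Real

theorem abs_arctan_mul_tan_le {c t : ℝ} (hc0 : 0 ≤ c) (hc1 : c ≤ 1) (ht0 : 0 ≤ t)
    (ht1 : t ≤ π / 2) : |arctan (c * tan t)| ≤ t := by
  have htan : 0 ≤ tan t := tan_nonneg_of_nonneg_of_le_pi_div_two ht0 ht1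
  rw [abs_of_nonneg (arctan_nonneg.mpr (mul_nonneg hc0 htan))]
  rcases ht1.lt_or_eq with ht1 | rfl
  · calc arctan (c * tan t) ≤ arctan (tan t) :=
          arctan_strictMono.monotone (mul_le_of_le_one_left htan hc1)
      _ = t := arctan_tan (by linarith [pi_pos]) ht1
  · -- `tan (π / 2) = 0` as a junk value of `sin / cos`
    simpa [tan_pi_div_two] using ht0

theorem mul_sin_le_sin_mul {s θ : ℝ} (hs0 : 0 ≤ s) (hs1 : s ≤ 1) (hθ0 : 0 ≤ θ) (hθ1 : θ ≤ π) :
    s * sin θ ≤ sin (s * θ) := by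
  have hconc := strictConcaveOn_sin_Icc.concaveOn.2 ⟨hθ0, hθ1⟩ ⟨le_rfl, pi_pos.le⟩
    hs0 (sub_nonneg.mpr hs1) (add_sub_cancel s 1)
  simpa only [smul_eq_mul, sin_zero, mul_zero, add_zero] using hconc

theorem arcsin_sin_mul_sin_le {t θ : ℝ} (ht0 : 0 ≤ t) (hθ0 : 0 ≤ θ) (hθ1 : θ ≤ π / 2) :
    arcsin (sin θ * sin t) ≤ t * θ := by
  have hsθ : 0 ≤ sin θ := sin_nonneg_of_nonneg_of_le_pi hθ0 (by linarith [pi_pos])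
  rcases le_total t 1 with ht1 | ht1
  · have hsin : sin θ * sin t ≤ sin (t * θ) :=
      calc sin θ * sin t ≤ sin θ * t := mul_le_mul_of_nonneg_left (sin_le ht0) hsθ
        _ = t * sin θ := mul_comm _ _
        _ ≤ sin (t * θ) := mul_sin_le_sin_mul ht0 ht1 hθ0 (by linarith [pi_pos])
    have htθ : t * θ ≤ π / 2 := by nlinarith
    calc arcsin (sin θ * sin t) ≤ arcsin (sin (t * θ)) := monotone_arcsin hsin
      _ = t * θ := arcsin_sin (by linarith [pi_pos, mul_nonneg ht0 hθ0]) htθ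
  · calc arcsin (sin θ * sin t) ≤ arcsin (sin θ) :=
          monotone_arcsin (mul_le_of_le_one_right hsθ (sin_le_one t))
      _ = θ := arcsin_sin (by linarith [pi_pos]) hθ1
      _ ≤ t * θ := le_mul_of_one_le_left hθ0 ht1

end Real

/-- Pulse-time bounds for the depth-3 decomposition: for `0 ≤ t ≤ π/2` and
`0 < θ < π/2`, the pulse times `t₁ = (1/2)·arctan(cos θ sin t / cos t)` and
`t₂ = arcsin(sin θ sin t)` satisfy `|t₁| ≤ t/2` and `|t₂| ≤ t·θ`. -/
theorem depth3_pulse_time_bounds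
    (t θ : ℝ) (ht0 : 0 ≤ t) (ht1 : t ≤ Real.pi / 2)
    (hθ0 : 0 < θ) (hθ1 : θ < Real.pi / 2) :
    |(1 / 2) * Real.arctan (Real.cos θ * Real.sin t / Real.cos t)| ≤ t / 2 ∧
    |Real.arcsin (Real.sin θ * Real.sin t)| ≤ t * θ := by
  have hcθ : 0 ≤ cos θ := cos_nonneg_of_mem_Icc ⟨by linarith, hθ1.le⟩
  have hst : 0 ≤ sin θ * sin t :=
    mul_nonneg (sin_nonneg_of_nonneg_of_le_pi hθ0.le (by linarith))
      (sin_nonneg_of_nonneg_of_le_pi ht0 (by linarith))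
  constructor
  · have h := abs_arctan_mul_tan_le hcθ (cos_le_one θ) ht0 ht1
    rw [tan_eq_sin_div_cos, ← mul_div_assoc] at h
    rw [abs_mul, abs_of_pos one_half_pos]
    linarith
  · rw [abs_of_nonneg (arcsin_nonneg.mpr hst)]
    exact arcsin_sin_mul_sin_le ht0 hθ0.le hθ1.le
end

section
/- For 0 ≤ t ≤ π/2, the function t₁(t) = (1/2)·atan2( -√(sin 2t)/(sin t + cos t), 1/(sin t + cos t) ) satisfies |t₁(t)| ≤ √(t/2), and together with t₂(t) = (1/2)·atan2( √(sin 2t), cos t - sin t ) one has |t₁(t)| + |t₂(t)| ≤ √(2t). -/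
/-!
Write `s = √(sin 2t)` and `c = cos t - sin t`, so that `c² + s² = 1` and
`sin t + cos t = √(1 + s²)`. The two `atan2` values are then `-arctan s` and `arccos c`, hence
`|t₁| = arctan s / 2 ≤ s / 2 ≤ √(2t) / 2`. For the second bound put `θ = arctan s + arccos c`,
which lies in `[0, π]`; the addition formula gives `cos θ = (c - s²) / (sin t + cos t)`, so
`θ ≤ √(8t)` reduces, when `√(8t) ≤ π`, to
`cos √(8t) · (sin t + cos t) ≤ cos t - sin t - sin 2t`.
Alternating Taylor bounds for `sin` and `cos` turn this into polynomial inequalities on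
`[0, 1.234] ⊇ [0, π² / 8]`.
-/

open Real Finset

noncomputable def sinTaylor (n : ℕ) (x : ℝ) : ℝ :=
  ∑ k ∈ range n, (-1 : ℝ) ^ k * x ^ (2 * k + 1) / (2 * k + 1).factorial

noncomputable def cosTaylor (n : ℕ) (x : ℝ) : ℝ :=
  ∑ k ∈ range n, (-1 : ℝ) ^ k * x ^ (2 * k) / (2 * k).factorial

theorem hasDerivAt_sinTaylor (n : ℕ) (x : ℝ) : HasDerivAt (sinTaylor n) (cosTaylor n x) x := by
  refine HasDerivAt.fun_sum fun k _ => ?_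
  refine (((hasDerivAt_pow (2 * k + 1) x).const_mul _).div_const _).congr_deriv ?_
  rw [Nat.factorial_succ]
  push_cast
  field_simp

theorem hasDerivAt_cosTaylor_succ (n : ℕ) (x : ℝ) :
    HasDerivAt (cosTaylor (n + 1)) (-sinTaylor n x) x := by
  have h : cosTaylor (n + 1) = fun x =>
      ∑ k ∈ range n, (-1 : ℝ) ^ (k + 1) * x ^ (2 * k + 2) / (2 * k + 2).factorial + 1 := by
    funext x
    simp [cosTaylor, sum_range_succ', mul_add]
  rw [h, sinTaylor, ← sum_neg_distrib]
  refine (HasDerivAt.fun_sum fun k _ => ?_).add_const 1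
  refine (((hasDerivAt_pow (2 * k + 2) x).const_mul _).div_const _).congr_deriv ?_
  rw [Nat.factorial_succ (2 * k + 1)]
  push_cast
  field_simp
  ring

theorem nonneg_of_hasDerivAt_nonneg {f f' : ℝ → ℝ} (hf : ∀ x, HasDerivAt f (f' x) x)
    (hf' : ∀ x, 0 ≤ x → 0 ≤ f' x) (h0 : f 0 = 0) {x : ℝ} (hx : 0 ≤ x) : 0 ≤ f x := by
  have hmono : MonotoneOn f (Set.Ici 0) :=
    monotoneOn_of_hasDerivWithinAt_nonneg (convex_Ici 0)
      (continuous_iff_continuousAt.2 fun y => (hf y).continuousAt).continuousOn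
      (fun y _ => (hf y).hasDerivWithinAt)
      (fun y hy => hf' y (by rw [interior_Ici] at hy; exact le_of_lt hy))
  simpa [h0] using hmono Set.self_mem_Ici hx hx

theorem alternating_taylor_bounds (n : ℕ) {x : ℝ} (hx : 0 ≤ x) :
    0 ≤ (-1) ^ n * (cosTaylor (n + 1) x - cos x) ∧
      0 ≤ (-1) ^ n * (sinTaylor (n + 1) x - sin x) := by
  have sin_step : ∀ n, (∀ x, 0 ≤ x → 0 ≤ (-1) ^ n * (cosTaylor (n + 1) x - cos x)) →
      ∀ x, 0 ≤ x → 0 ≤ (-1) ^ n * (sinTaylor (n + 1) x - sin x) := fun n hcos x hx =>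
    nonneg_of_hasDerivAt_nonneg
      (fun y => ((hasDerivAt_sinTaylor (n + 1) y).sub (hasDerivAt_sin y)).const_mul _)
      hcos (by simp [sinTaylor]) hx
  have cos_step : ∀ n, (∀ x, 0 ≤ x → 0 ≤ (-1) ^ n * (sinTaylor (n + 1) x - sin x)) →
      ∀ x, 0 ≤ x → 0 ≤ (-1) ^ (n + 1) * (cosTaylor (n + 2) x - cos x) := fun n hsin x hx =>
    nonneg_of_hasDerivAt_nonneg
      (fun y => (((hasDerivAt_cosTaylor_succ (n + 1) y).sub (hasDerivAt_cos y)).const_mul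
        ((-1 : ℝ) ^ (n + 1))).congr_deriv (by ring))
      hsin (by simp [cosTaylor, sum_range_succ']) hx
  have hcos : ∀ n, ∀ x, 0 ≤ x → 0 ≤ (-1) ^ n * (cosTaylor (n + 1) x - cos x) := by
    intro n
    induction n with
    | zero => simpa [cosTaylor] using fun x _ => cos_le_one x
    | succ n ih => exact cos_step n (sin_step n ih)
  exact ⟨hcos n x hx, sin_step n (hcos n) x hx⟩

theorem sin_le_taylor_five {x : ℝ} (hx : 0 ≤ x) : sin x ≤ x - x ^ 3 / 6 + x ^ 5 / 120 := by
  have h := (alternating_taylor_bounds 2 hx).2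
  have e : sinTaylor 3 x = x - x ^ 3 / 6 + x ^ 5 / 120 := by
    norm_num [sinTaylor, sum_range_succ, Nat.factorial, neg_div, ← sub_eq_add_neg]
  rw [e] at h
  linarith

theorem taylor_six_le_cos {x : ℝ} (hx : 0 ≤ x) :
    1 - x ^ 2 / 2 + x ^ 4 / 24 - x ^ 6 / 720 ≤ cos x := by
  have h := (alternating_taylor_bounds 3 hx).1
  have e : cosTaylor 4 x = 1 - x ^ 2 / 2 + x ^ 4 / 24 - x ^ 6 / 720 := by
    norm_num [cosTaylor, sum_range_succ, Nat.factorial, neg_div, ← sub_eq_add_neg]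
  rw [e] at h
  linarith

theorem cos_le_taylor_eight {x : ℝ} (hx : 0 ≤ x) :
    cos x ≤ 1 - x ^ 2 / 2 + x ^ 4 / 24 - x ^ 6 / 720 + x ^ 8 / 40320 := by
  have h := (alternating_taylor_bounds 4 hx).1
  have e : cosTaylor 5 x = 1 - x ^ 2 / 2 + x ^ 4 / 24 - x ^ 6 / 720 + x ^ 8 / 40320 := by
    norm_num [cosTaylor, sum_range_succ, Nat.factorial, neg_div, ← sub_eq_add_neg]
  rw [e] at h
  linarith

theorem atan2_mul_sin_mul_cos {r θ : ℝ} (hr : 0 < r) (hθ : θ ∈ Set.Ioc (-π) π) :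
    atan2 (r * sin θ) (r * cos θ) = θ := by
  rw [atan2, show ((r * cos θ : ℝ) : ℂ) + (r * sin θ : ℝ) * Complex.I =
      r * (Complex.cos θ + Complex.sin θ * Complex.I) by push_cast; ring,
    Complex.arg_real_mul _ hr, Complex.arg_cos_add_sin_mul_I hθ]

theorem atan2_eq_arctan_div {x y : ℝ} (hx : 0 < x) : atan2 y x = arctan (y / x) := by
  have hc : 0 < cos (arctan (y / x)) := cos_arctan_pos _
  have key := atan2_mul_sin_mul_cos (div_pos hx hc)
    ⟨by linarith [neg_pi_div_two_lt_arctan (y / x), pi_pos], (arctan_lt_pi_div_two _).le.trans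
      (by linarith [pi_pos])⟩
  rwa [div_mul_cancel₀ _ hc.ne', div_mul_eq_mul_div, mul_div_assoc, ← tan_eq_sin_div_cos,
    tan_arctan, mul_div_cancel₀ _ hx.ne'] at key

theorem atan2_eq_arccos {x y : ℝ} (hy : 0 ≤ y) (h : x ^ 2 + y ^ 2 = 1) :
    atan2 y x = arccos x := by
  have hx : x ∈ Set.Icc (-1) 1 := ⟨by nlinarith, by nlinarith⟩
  have key := atan2_mul_sin_mul_cos one_pos
    ⟨by linarith [arccos_nonneg x, pi_pos], arccos_le_pi x⟩
  rwa [one_mul, one_mul, cos_arccos hx.1 hx.2, sin_arccos, ← h, add_sub_cancel_left,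
    sqrt_sq hy] at key

theorem arctan_le_self {x : ℝ} (hx : 0 ≤ x) : arctan x ≤ x := by
  simpa using le_tan (arctan_nonneg.2 hx) (arctan_lt_pi_div_two x)

theorem cos_arctan_add_arccos {s c : ℝ} (hs : 0 ≤ s) (h : c ^ 2 + s ^ 2 = 1) :
    cos (arctan s + arccos c) = (c - s ^ 2) / √(1 + s ^ 2) := by
  have hc : c ∈ Set.Icc (-1) 1 := ⟨by nlinarith, by nlinarith⟩
  rw [cos_add, cos_arctan, sin_arctan, cos_arccos hc.1 hc.2, sin_arccos,
    show 1 - c ^ 2 = s ^ 2 by linarith, sqrt_sq hs]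
  ring

theorem arctan_add_arccos_le_pi {s c : ℝ} (hs : 0 ≤ s) (h : c ^ 2 + s ^ 2 = 1) :
    arctan s + arccos c ≤ π := by
  have hr : 0 < √(1 + s ^ 2) := sqrt_pos.2 (by positivity)
  have hr2 : √(1 + s ^ 2) ^ 2 = 1 + s ^ 2 := sq_sqrt (by positivity)
  -- `(c √(1 + s²))² = 1 - s⁴ ≤ 1`
  have hneg : -c ≤ 1 / √(1 + s ^ 2) := by
    rw [le_div_iff₀ hr]
    nlinarith [sq_nonneg (c * √(1 + s ^ 2) + 1), sq_nonneg s]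
  have : arctan s ≤ arccos (-c) := by
    rw [← arccos_cos (arctan_nonneg.2 hs)
      ((arctan_lt_pi_div_two s).le.trans (by linarith [pi_pos])), cos_arctan]
    exact arccos_le_arccos hneg
  rw [arccos_neg] at this
  linarith

theorem cos_sub_sin_sq_add_sin_two_mul (t : ℝ) : (cos t - sin t) ^ 2 + sin (2 * t) = 1 := by
  rw [sin_two_mul]
  linear_combination sin_sq_add_cos_sq t

theorem sin_add_cos_eq_sqrt {t : ℝ} (h : 0 ≤ sin t + cos t) :
    sin t + cos t = √(1 + sin (2 * t)) := by
  rw [← sqrt_sq h, sin_two_mul]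
  congr 1
  linear_combination sin_sq_add_cos_sq t

theorem cos_sqrt_eight_mul_le {t : ℝ} (ht : 0 ≤ t) :
    cos √(8 * t) ≤ 1 - 4 * t + 8 / 3 * t ^ 2 - 32 / 45 * t ^ 3 + 32 / 315 * t ^ 4 := by
  calc cos √(8 * t)
      ≤ 1 - √(8 * t) ^ 2 / 2 + (√(8 * t) ^ 2) ^ 2 / 24 - (√(8 * t) ^ 2) ^ 3 / 720
          + (√(8 * t) ^ 2) ^ 4 / 40320 := by
        linarith [cos_le_taylor_eight (sqrt_nonneg (8 * t))]
    _ = _ := by rw [sq_sqrt (by linarith)]; ring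

theorem pulse_polynomial_bounds {t : ℝ} (h0 : 0 ≤ t) (h1 : t ≤ 1.234) :
    let a := t - t ^ 3 / 6 + t ^ 5 / 120
    let b := 1 - t ^ 2 / 2 + t ^ 4 / 24 - t ^ 6 / 720
    let P := 1 - 4 * t + 8 / 3 * t ^ 2 - 32 / 45 * t ^ 3 + 32 / 315 * t ^ 4
    2 * a + P ≤ 1 ∧ 0 ≤ 1 + 2 * b + P ∧ 0 ≤ b - a - 2 * a * b - P * (a + b) := by
  dsimp only
  have hd : 0 ≤ 1.234 - t := by linarith
  refine ⟨?_, ?_, ?_⟩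
  · nlinarith [mul_nonneg (pow_nonneg h0 4) hd, mul_nonneg (pow_nonneg h0 3) hd,
      pow_nonneg h0 3, pow_nonneg h0 2]
  · nlinarith [mul_nonneg (pow_nonneg h0 4) hd, mul_nonneg (pow_nonneg h0 5) hd,
      mul_nonneg (pow_nonneg h0 2) hd, mul_nonneg h0 hd, pow_nonneg h0 2]
  · have hd4 : 0 ≤ (1.234 - t) ^ 4 := by positivity
    -- the remainder vanishes to second order at `t = 0`
    have hQ : 0 ≤ 4/3 - 103/45*t + 134/105*t^2 - 163/1260*t^3 - 55/378*t^4 + 331/7560*t^5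
        + 17/3150*t^6 - 1357/453600*t^7 + 2/14175*t^8 + 1/43200*t^9 := by
      nlinarith [mul_nonneg hd4 h0, mul_nonneg hd4 (pow_nonneg h0 2),
        mul_nonneg hd4 (pow_nonneg h0 3), mul_nonneg hd4 (pow_nonneg h0 4),
        mul_nonneg hd4 (pow_nonneg h0 5)]
    calc (0 : ℝ) ≤ t ^ 2 * (4/3 - 103/45*t + 134/105*t^2 - 163/1260*t^3 - 55/378*t^4
        + 331/7560*t^5 + 17/3150*t^6 - 1357/453600*t^7 + 2/14175*t^8 + 1/43200*t^9) := by
          positivity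
      _ = _ := by ring

theorem one_le_sin_add_cos {t : ℝ} (h0 : 0 ≤ t) (h1 : t ≤ π / 2) : 1 ≤ sin t + cos t := by
  have hS : 0 ≤ sin t := sin_nonneg_of_nonneg_of_le_pi h0 (by linarith [pi_pos])
  have hC : 0 ≤ cos t := cos_nonneg_of_mem_Icc ⟨by linarith [pi_pos], h1⟩
  nlinarith [sin_sq_add_cos_sq t, sin_le_one t, cos_le_one t]

theorem cos_sqrt_eight_mul_mul_le {t : ℝ} (h0 : 0 ≤ t) (h1 : √(8 * t) ≤ π) :
    cos √(8 * t) * (sin t + cos t) ≤ cos t - sin t - sin (2 * t) := by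
  have ht : t ≤ 1.234 := by
    nlinarith [sq_sqrt (by linarith : (0 : ℝ) ≤ 8 * t), sqrt_nonneg (8 * t), pi_lt_d4]
  have hsum := one_le_sin_add_cos h0 (by linarith [pi_gt_three])
  obtain ⟨ha, hb, hE⟩ := pulse_polynomial_bounds h0 ht
  have hP := cos_sqrt_eight_mul_le h0
  have hsin := sin_le_taylor_five h0
  have hcos := taylor_six_le_cos h0
  set a := t - t ^ 3 / 6 + t ^ 5 / 120
  set b := 1 - t ^ 2 / 2 + t ^ 4 / 24 - t ^ 6 / 720
  set P := 1 - 4 * t + 8 / 3 * t ^ 2 - 32 / 45 * t ^ 3 + 32 / 315 * t ^ 4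
  rw [sin_two_mul]
  -- `C - S - 2SC - P(S + C)` increases in `C` and decreases in `S`, so it is at least its value
  -- `hE` at the Taylor bounds `S ≤ a`, `b ≤ C`.
  nlinarith [mul_le_mul_of_nonneg_right hP (by linarith : 0 ≤ sin t + cos t),
    mul_nonneg (sub_nonneg.2 hcos) (by linarith : 0 ≤ 1 - 2 * sin t - P),
    mul_nonneg (sub_nonneg.2 hsin) hb]

theorem arctan_add_arccos_le_sqrt {t : ℝ} (h0 : 0 ≤ t) (h1 : t ≤ π / 2) :
    arctan √(sin (2 * t)) + arccos (cos t - sin t) ≤ √(8 * t) := by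
  have hsum := one_le_sin_add_cos h0 h1
  have hs2 : √(sin (2 * t)) ^ 2 = sin (2 * t) :=
    sq_sqrt (sin_nonneg_of_nonneg_of_le_pi (by linarith) (by linarith))
  have hcs : (cos t - sin t) ^ 2 + √(sin (2 * t)) ^ 2 = 1 := by
    rw [hs2, cos_sub_sin_sq_add_sin_two_mul]
  have hθ := arctan_add_arccos_le_pi (sqrt_nonneg _) hcs
  rcases le_or_gt π √(8 * t) with hπ | hπ
  · linarith
  have hθ0 : 0 ≤ arctan √(sin (2 * t)) + arccos (cos t - sin t) :=
    add_nonneg (arctan_nonneg.2 (sqrt_nonneg _)) (arccos_nonneg _)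
  rw [← (strictAntiOn_cos.le_iff_ge ⟨sqrt_nonneg _, hπ.le⟩ ⟨hθ0, hθ⟩),
    cos_arctan_add_arccos (sqrt_nonneg _) hcs, hs2, ← sin_add_cos_eq_sqrt (by linarith),
    le_div_iff₀ (by linarith)]
  exact cos_sqrt_eight_mul_mul_le h0 hπ.le

/-- Pulse-time bounds for the depth-4 decomposition: for `0 ≤ t ≤ π/2`,
`|t₁(t)| ≤ √(t/2)` and `|t₁(t)| + |t₂(t)| ≤ √(2t)`. -/
theorem depth4_pulse_time_bounds
    (t : ℝ) (ht0 : 0 ≤ t) (ht1 : t ≤ Real.pi / 2) :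
    |(1 / 2) * atan2 (-Real.sqrt (Real.sin (2 * t)) / (Real.sin t + Real.cos t))
        (1 / (Real.sin t + Real.cos t))| ≤ Real.sqrt (t / 2) ∧
    |(1 / 2) * atan2 (-Real.sqrt (Real.sin (2 * t)) / (Real.sin t + Real.cos t))
        (1 / (Real.sin t + Real.cos t))| +
      |(1 / 2) * atan2 (Real.sqrt (Real.sin (2 * t))) (Real.cos t - Real.sin t)|
      ≤ Real.sqrt (2 * t) := by
  have hsum : 0 < sin t + cos t := by linarith [one_le_sin_add_cos ht0 ht1]
  set s := √(sin (2 * t))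
  have hs : 0 ≤ s := sqrt_nonneg _
  have ht₁ : atan2 (-s / (sin t + cos t)) (1 / (sin t + cos t)) = -arctan s := by
    rw [atan2_eq_arctan_div (by positivity), div_div_div_cancel_right₀ hsum.ne', div_one,
      arctan_neg]
  have ht₂ : atan2 s (cos t - sin t) = arccos (cos t - sin t) :=
    atan2_eq_arccos hs (by
      rw [sq_sqrt (sin_nonneg_of_nonneg_of_le_pi (by linarith) (by linarith)),
        cos_sub_sin_sq_add_sin_two_mul])
  have hs_le : s ≤ √(2 * t) := sqrt_le_sqrt (sin_le (by positivity))
  have hsqrt2 : √(2 * t) = 2 * √(t / 2) := by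
    rw [show 2 * t = 2 ^ 2 * (t / 2) by ring, sqrt_mul (by positivity), sqrt_sq two_pos.le]
  have hsqrt8 : √(8 * t) = 2 * √(2 * t) := by
    rw [show 8 * t = 2 ^ 2 * (2 * t) by ring, sqrt_mul (by positivity), sqrt_sq two_pos.le]
  have hθ := arctan_add_arccos_le_sqrt ht0 ht1
  rw [ht₁, ht₂, abs_of_nonpos (by linarith [arctan_nonneg.2 hs]),
    abs_of_nonneg (by linarith [arccos_nonneg (cos t - sin t)])]
  constructor <;> linarith [arctan_le_self hs]
end

section
/- Define B_p for p = 2k by B_2 = 1/2 and B_{2k} = (1/2)·∏_{i=2}^{k} |1 - 4a_i| for k ≥ 2, where a_i = 1/(4 - 4^{1/(2i-1)}). Then B_{2k} ≤ (1/2)·(2/3)^{k-1} for all k ≥ 1. -/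
/-!
Writing `t = 4 ^ (1 / (2i - 1))`, one has `1 - 4 a_i = -t / (4 - t)`, and for `i ≥ 2` the exponent is at
most `1/3`, so `t ≤ 4 ^ (1/3) ≤ 8/5` (as `(8/5)^3 = 512/125 ≥ 4`). On `0 ≤ t ≤ 8/5` the ratio
`t / (4 - t)` is at most `2/3`, and each of the `k - 1` factors of the product is bounded by `2/3`.
-/

lemma four_rpow_le_eight_fifths {x : ℝ} (hx : x ≤ 1 / 3) : (4 : ℝ) ^ x ≤ 8 / 5 :=
  calc (4 : ℝ) ^ x ≤ 4 ^ (3 : ℝ)⁻¹ := Real.rpow_le_rpow_of_exponent_le (by norm_num) (by linarith)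
    _ ≤ 8 / 5 := (Real.rpow_inv_le_iff_of_pos (by norm_num) (by norm_num) (by norm_num)).2 (by norm_num)

lemma one_div_two_mul_sub_one_le_one_third {i : ℕ} (hi : 2 ≤ i) :
    (1 : ℝ) / (2 * (i : ℝ) - 1) ≤ 1 / 3 := by
  have : (2 : ℝ) ≤ i := by exact_mod_cast hi
  exact one_div_le_one_div_of_le (by norm_num) (by linarith)

lemma abs_one_sub_four_mul_one_div_four_sub_le {t : ℝ} (ht₀ : 0 ≤ t) (ht : t ≤ 8 / 5) :
    |1 - 4 * (1 / (4 - t))| ≤ 2 / 3 := by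
  have hpos : 0 < 4 - t := by linarith
  have hrepr : 1 - 4 * (1 / (4 - t)) = -(t / (4 - t)) := by field_simp; ring
  rw [hrepr, abs_neg, abs_of_nonneg (div_nonneg ht₀ hpos.le), div_le_iff₀ hpos]
  linarith

/-- Bound on the products of Suzuki coefficients:
`B_{2k} = (1/2)·∏_{i=2}^{k} |1 - 4a_i| ≤ (1/2)·(2/3)^{k-1}` for all `k ≥ 1`. -/
theorem suzuki_product_bound
    (a : ℕ → ℝ)
    (ha : ∀ i : ℕ, a i = 1 / (4 - (4 : ℝ) ^ ((1 : ℝ) / (2 * (i : ℝ) - 1)))) :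
    ∀ k : ℕ, 1 ≤ k →
      (1 / 2) * ∏ i ∈ Finset.Icc 2 k, |1 - 4 * a i| ≤ (1 / 2) * (2 / 3) ^ (k - 1) := by
  intro k _
  have hfactor : ∀ i ∈ Finset.Icc 2 k, |1 - 4 * a i| ≤ 2 / 3 := fun i hi => by
    rw [ha i]
    exact abs_one_sub_four_mul_one_div_four_sub_le (by positivity)
      (four_rpow_le_eight_fifths
        (one_div_two_mul_sub_one_le_one_third (Finset.mem_Icc.mp hi).1))
  have hprod : ∏ i ∈ Finset.Icc 2 k, |1 - 4 * a i| ≤ (2 / 3) ^ (k - 1) :=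
    calc ∏ i ∈ Finset.Icc 2 k, |1 - 4 * a i| ≤ ∏ _i ∈ Finset.Icc 2 k, (2 / 3 : ℝ) :=
          Finset.prod_le_prod (fun i _ => abs_nonneg _) hfactor
      _ = (2 / 3) ^ (k - 1) := by rw [Finset.prod_const, Nat.card_Icc, Nat.add_sub_add_right]
  linarith
end
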